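/- arXiv:2012.07195 — 5 statements merged into one kernel-verified Lean document; each statement's English description precedes it below -/
import Mathlib

section
/- (Theorem 1, piecewise linearity of the provider's commitment value.) Suppose there exists p̄ ≥ 0 such that for every p ∈ [0, p̄] the feasible set S(p) is nonempty, and the objective set {c · x : x ∈ S(0)} is bounded above. Then v is piecewise linear on [0, p̄]: there exist n ≥ 1, points 0 = t_0 ≤ t_1 ≤ ⋯ ≤ t_n = p̄, and reals α_j, β_j such that v(p) = α_j · p + β_j for all p ∈ [t_{j−1}, t_j] and each j = 1, …, n. -/
open Matrix

/-- Feasible set of the provider's commitment-constrained LP. -/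
def feasibleSet {m n : ℕ} (A : Matrix (Fin m) (Fin n) ℝ) (b : Fin m → ℝ)
    (d : Fin n → ℝ) (p : ℝ) : Set (Fin n → ℝ) :=
  {x | 0 ≤ x ∧ A.mulVec x = b ∧ d ⬝ᵥ x ≥ p}

/-- The provider's commitment value. -/
noncomputable def commitValue {m n : ℕ} (A : Matrix (Fin m) (Fin n) ℝ) (b : Fin m → ℝ)
    (c d : Fin n → ℝ) (p : ℝ) : ℝ :=
  sSup ((fun x => c ⬝ᵥ x) '' feasibleSet A b d p)

/-!
Eliminating the variables `x` one at a time (Fourier–Motzkin) shows that the set of pairs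
`(p, y)` with `y ≤ c ⬝ᵥ x` for some `x ∈ S(p)` is cut out by finitely many half-planes
`w k * y ≤ s k * p + r k`. For fixed `p` the largest such `y`, which is `v(p)`, is then the
minimum of the affine functions `(s k * p + r k) / w k` over the `k` with `w k > 0`; such `k`
exist because `v(0)` is finite. A minimum of finitely many affine functions is piecewise
linear: adding one affine function splits every piece at most once.
-/

open Finset

theorem Finset.exists_le_le_of_forall_le {α : Type*} [LinearOrder α] [Nonempty α]
    {s t : Finset α} (h : ∀ a ∈ s, ∀ b ∈ t, a ≤ b) : ∃ c, (∀ a ∈ s, a ≤ c) ∧ ∀ b ∈ t, c ≤ b := by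
  rcases s.eq_empty_or_nonempty with rfl | hs
  · rcases t.eq_empty_or_nonempty with rfl | ht
    · exact ⟨Classical.arbitrary α, by simp, by simp⟩
    · exact ⟨t.min' ht, by simp, t.min'_le⟩
  · exact ⟨s.max' hs, s.le_max', fun b hb => s.max'_le hs _ fun a ha => h a ha b hb⟩

theorem Matrix.mulVec_fin_cons {R ι : Type*} [NonUnitalNonAssocSemiring R] {d : ℕ}
    (G : Matrix ι (Fin (d + 1)) R) (t : R) (y : Fin d → R) :
    G *ᵥ Fin.cons t y = fun i => G i 0 * t + (G.submatrix id Fin.succ *ᵥ y) i := by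
  ext i
  simp [mulVec, dotProduct, Fin.sum_univ_succ]

section FourierMotzkin

variable {𝕜 ι : Type*} [Field 𝕜] [LinearOrder 𝕜] [IsStrictOrderedRing 𝕜] [Fintype ι]

theorem exists_forall_mul_le_iff (a ψ : ι → 𝕜) :
    (∃ t, ∀ i, a i * t ≤ ψ i) ↔
      (∀ i, a i = 0 → 0 ≤ ψ i) ∧ ∀ i j, 0 < a i → a j < 0 → ψ j / a j ≤ ψ i / a i := by
  constructor
  · rintro ⟨t, ht⟩
    refine ⟨fun i hi => by simpa [hi] using ht i, fun i j hi hj => ?_⟩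
    calc ψ j / a j ≤ t := (div_le_iff_of_neg hj).2 (by linarith [ht j])
      _ ≤ ψ i / a i := (le_div_iff₀ hi).2 (by linarith [ht i])
  · rintro ⟨hzero, hcross⟩
    obtain ⟨t, hlower, hupper⟩ := Finset.exists_le_le_of_forall_le
      (s := (univ.filter (a · < 0)).image fun j => ψ j / a j)
      (t := (univ.filter (0 < a ·)).image fun i => ψ i / a i)
      (by simp only [mem_image, mem_filter, mem_univ, true_and]
          rintro _ ⟨j, hj, rfl⟩ _ ⟨i, hi, rfl⟩
          exact hcross i j hi hj)
    refine ⟨t, fun i => ?_⟩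
    rcases lt_trichotomy (a i) 0 with hi | hi | hi
    · have := hlower _ (mem_image_of_mem _ (mem_filter.2 ⟨mem_univ i, hi⟩))
      rwa [div_le_iff_of_neg hi, mul_comm] at this
    · simpa [hi] using hzero i hi
    · have := hupper _ (mem_image_of_mem _ (mem_filter.2 ⟨mem_univ i, hi⟩))
      rwa [le_div_iff₀ hi, mul_comm] at this

/-- Row `inl i` keeps a constraint `a i * t ≤ ψ i` in which `t` does not occur; row `inr (i, j)`
combines the upper bound `t ≤ ψ i / a i` with the lower bound `ψ j / a j ≤ t`. -/
def fourierMotzkinMatrix [DecidableEq ι] (a : ι → 𝕜) : Matrix (ι ⊕ ι × ι) ι 𝕜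
    | .inl i => if a i = 0 then Pi.single i 1 else 0
    | .inr (i, j) => if 0 < a i ∧ a j < 0 then Pi.single i (a i)⁻¹ - Pi.single j (a j)⁻¹ else 0

theorem nonneg_fourierMotzkinMatrix_mulVec_iff [DecidableEq ι] (a ψ : ι → 𝕜) :
    0 ≤ fourierMotzkinMatrix a *ᵥ ψ ↔
      (∀ i, a i = 0 → 0 ≤ ψ i) ∧ ∀ i j, 0 < a i → a j < 0 → ψ j / a j ≤ ψ i / a i := by
  refine Sum.forall.trans (and_congr (forall_congr' fun i => ?_) (Prod.forall.trans
    (forall₂_congr fun i j => ?_)))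
  · change 0 ≤ fourierMotzkinMatrix a (.inl i) ⬝ᵥ ψ ↔ _
    by_cases h : a i = 0 <;> simp [fourierMotzkinMatrix, h, single_dotProduct]
  · change 0 ≤ fourierMotzkinMatrix a (.inr (i, j)) ⬝ᵥ ψ ↔ _
    by_cases h : 0 < a i ∧ a j < 0
    · simp [fourierMotzkinMatrix, h, sub_dotProduct, single_dotProduct, div_eq_inv_mul]
    · simp only [fourierMotzkinMatrix, if_neg h, zero_dotProduct, le_refl, true_iff]
      exact fun hi hj => absurd ⟨hi, hj⟩ h

theorem exists_forall_mul_le_iff_nonneg_mulVec [DecidableEq ι] (a ψ : ι → 𝕜) :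
    (∃ t, ∀ i, a i * t ≤ ψ i) ↔ 0 ≤ fourierMotzkinMatrix a *ᵥ ψ := by
  rw [exists_forall_mul_le_iff, nonneg_fourierMotzkinMatrix_mulVec_iff]

theorem exists_finset_exists_mulVec_le_iff {d : ℕ} (G : Matrix ι (Fin d) 𝕜) :
    ∃ L : Finset (ι → 𝕜), ∀ φ, (∃ x, G *ᵥ x ≤ φ) ↔ ∀ l ∈ L, 0 ≤ l ⬝ᵥ φ := by
  classical
  induction d generalizing ι with
  | zero =>
    refine ⟨univ.image fun i => Pi.single i 1, fun φ => ?_⟩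
    have hG : ∀ x, G *ᵥ x = 0 := fun x => funext fun i => by simp [mulVec, dotProduct]
    simp [hG, Pi.le_def, single_dotProduct]
  | succ d ih =>
    set E := fourierMotzkinMatrix fun i => G i 0
    set H := G.submatrix id Fin.succ
    obtain ⟨L, hL⟩ := ih (E * H)
    refine ⟨L.image (· ᵥ* E), fun φ => ?_⟩
    calc (∃ x, G *ᵥ x ≤ φ) ↔ ∃ y, ∃ t, ∀ i, G i 0 * t ≤ (φ - H *ᵥ y) i := by
          rw [Fin.exists_fin_succ_pi, exists_comm]
          simp only [mulVec_fin_cons, Pi.le_def, Pi.sub_apply, le_sub_iff_add_le]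
          rfl
      _ ↔ ∃ y, (E * H) *ᵥ y ≤ E *ᵥ φ := by
          simp_rw [exists_forall_mul_le_iff_nonneg_mulVec, mulVec_sub, sub_nonneg, mulVec_mulVec]
          rfl
      _ ↔ ∀ l ∈ L, 0 ≤ l ⬝ᵥ (E *ᵥ φ) := hL _
      _ ↔ ∀ l ∈ L.image (· ᵥ* E), 0 ≤ l ⬝ᵥ φ := by simp [dotProduct_mulVec]

end FourierMotzkin

section PiecewiseAffine

variable {𝕜 : Type*} [Field 𝕜] [LinearOrder 𝕜]

inductive IsPiecewiseAffineOn (f : 𝕜 → 𝕜) : 𝕜 → 𝕜 → Prop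
  | affine {a b : 𝕜} (α β : 𝕜) (hab : a ≤ b) (h : ∀ p ∈ Set.Icc a b, f p = α * p + β) :
      IsPiecewiseAffineOn f a b
  | trans {a b c : 𝕜} :
      IsPiecewiseAffineOn f a b → IsPiecewiseAffineOn f b c → IsPiecewiseAffineOn f a c

namespace IsPiecewiseAffineOn

variable {f g : 𝕜 → 𝕜} {a b : 𝕜}

theorem le (h : IsPiecewiseAffineOn f a b) : a ≤ b := by
  induction h with
  | affine _ _ hab => exact hab
  | trans _ _ hab hbc => exact hab.trans hbc

theorem congr (h : IsPiecewiseAffineOn f a b) (hfg : Set.EqOn f g (Set.Icc a b)) :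
    IsPiecewiseAffineOn g a b := by
  induction h with
  | affine α β hab h => exact .affine α β hab fun p hp => (hfg hp).symm.trans (h p hp)
  | trans hab hbc ihab ihbc =>
    exact .trans (ihab fun p hp => hfg ⟨hp.1, hp.2.trans hbc.le⟩)
      (ihbc fun p hp => hfg ⟨hab.le.trans hp.1, hp.2⟩)

theorem exists_partition (h : IsPiecewiseAffineOn f a b) :
    ∃ N, 1 ≤ N ∧ ∃ t : ℕ → 𝕜, t 0 = a ∧ t N = b ∧ (∀ j < N, t j ≤ t (j + 1)) ∧
      ∃ α β : ℕ → 𝕜, ∀ j, 1 ≤ j → j ≤ N →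
        ∀ p ∈ Set.Icc (t (j - 1)) (t j), f p = α j * p + β j := by
  induction h with
  | @affine a b α β hab h =>
    refine ⟨1, le_rfl, fun k => if k = 0 then a else b, by simp, by simp, ?_, fun _ => α,
      fun _ => β, fun j hj1 hj2 p hp => h p ?_⟩
    · intro j hj
      simp [show j = 0 by omega, hab]
    · obtain rfl : j = 1 := by omega
      simpa using hp
  | @trans a b c _ _ ihab ihbc =>
    obtain ⟨N₁, hN₁, t₁, ht₁0, ht₁N, ht₁, α₁, β₁, h₁⟩ := ihab
    obtain ⟨N₂, hN₂, t₂, ht₂0, ht₂N, ht₂, α₂, β₂, h₂⟩ := ihbc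
    set t : ℕ → 𝕜 := fun k => if k ≤ N₁ then t₁ k else t₂ (k - N₁)
    have ht_low : ∀ k ≤ N₁, t k = t₁ k := fun k hk => if_pos hk
    -- the two partitions share the point `t₁ N₁ = b = t₂ 0`
    have ht_high : ∀ k, N₁ ≤ k → t k = t₂ (k - N₁) := by
      intro k hk
      rcases hk.eq_or_lt with rfl | hk
      · simp [t, ht₁N, ht₂0]
      · exact if_neg (by omega)
    refine ⟨N₁ + N₂, by omega, t, by simp [t, ht₁0], by simp [ht_high, ht₂N], ?_,
      fun k => if k ≤ N₁ then α₁ k else α₂ (k - N₁),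
      fun k => if k ≤ N₁ then β₁ k else β₂ (k - N₁), ?_⟩
    · intro j hj
      by_cases hjN : j < N₁
      · simpa [ht_low j hjN.le, ht_low (j + 1) hjN] using ht₁ j hjN
      · rw [ht_high j (by omega), ht_high (j + 1) (by omega), Nat.sub_add_comm (by omega)]
        exact ht₂ _ (by omega)
    · intro j hj1 hj2 p hp
      by_cases hjN : j ≤ N₁
      · rw [ht_low _ (by omega), ht_low _ hjN] at hp
        simpa [hjN] using h₁ j hj1 hjN p hp
      · rw [ht_high _ (by omega), ht_high _ (by omega), Nat.sub_right_comm] at hp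
        simpa [hjN] using h₂ (j - N₁) (by omega) (by omega) p hp

variable [IsStrictOrderedRing 𝕜]

theorem min_affine_affine (α β γ δ : 𝕜) (hab : a ≤ b) :
    IsPiecewiseAffineOn (fun p => min (α * p + β) (γ * p + δ)) a b := by
  wlog hαγ : α ≤ γ generalizing α β γ δ
  · simpa only [min_comm] using this γ δ α β (le_of_not_ge hαγ)
  rcases hαγ.eq_or_lt with rfl | hαγ
  · exact .affine α (min β δ) hab fun p _ => min_add_add_left _ _ _
  -- the two lines cross at `w`; left of it the one of larger slope is smaller
  set w := (δ - β) / (α - γ)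
  have hleft : ∀ p ≤ w, min (α * p + β) (γ * p + δ) = γ * p + δ := fun p hp =>
    min_eq_right (by rw [le_div_iff_of_neg (sub_neg.2 hαγ)] at hp; nlinarith)
  have hright : ∀ p, w ≤ p → min (α * p + β) (γ * p + δ) = α * p + β := fun p hp =>
    min_eq_left (by rw [div_le_iff_of_neg (sub_neg.2 hαγ)] at hp; nlinarith)
  rcases le_total w a with hwa | haw
  · exact .affine α β hab fun p hp => hright p (hwa.trans hp.1)
  rcases le_total b w with hbw | hwb
  · exact .affine γ δ hab fun p hp => hleft p (hp.2.trans hbw)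
  exact .trans (.affine γ δ haw fun p hp => hleft p hp.2)
    (.affine α β hwb fun p hp => hright p hp.1)

theorem min_affine (h : IsPiecewiseAffineOn f a b) (γ δ : 𝕜) :
    IsPiecewiseAffineOn (fun p => min (f p) (γ * p + δ)) a b := by
  induction h with
  | affine α β hab h => exact (min_affine_affine α β γ δ hab).congr fun p hp => by simp [h p hp]
  | trans _ _ ihab ihbc => exact ihab.trans ihbc

theorem finset_inf' {κ : Type*} (s : Finset κ) (hs : s.Nonempty) (α β : κ → 𝕜) (hab : a ≤ b) :
    IsPiecewiseAffineOn (fun p => s.inf' hs fun k => α k * p + β k) a b := by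
  induction hs using Finset.Nonempty.cons_induction with
  | singleton k => exact .affine (α k) (β k) hab fun p _ => inf'_singleton _
  | cons k s hk hs ih =>
    convert ih.min_affine (α k) (β k) using 2 with p
    exact (inf'_cons hs _).trans (min_comm _ _)

end IsPiecewiseAffineOn

end PiecewiseAffine

theorem csSup_eq_of_isGreatest_lowerClosure {α : Type*} [ConditionallyCompleteLattice α]
    {s : Set α} {a : α} (h : IsGreatest (lowerClosure s : Set α) a) : sSup s = a := by
  have hlub : IsLUB s a := by simpa [IsLUB, upperBounds_lowerClosure] using h.isLUB
  obtain ⟨z, hz, -⟩ := h.1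
  exact hlub.csSup_eq ⟨z, hz⟩

section HalfLines

variable {𝕜 κ : Type*} [Field 𝕜] [LinearOrder 𝕜] [IsStrictOrderedRing 𝕜] [Fintype κ]
  {w c : κ → 𝕜}

theorem exists_pos_of_bddAbove_setOf (hne : ∃ y, ∀ k, w k * y ≤ c k)
    (hbdd : BddAbove {y | ∀ k, w k * y ≤ c k}) : ∃ k, 0 < w k := by
  by_contra! hw
  obtain ⟨y₀, hy₀⟩ := hne
  obtain ⟨u, hu⟩ := hbdd
  -- no slope is positive, so every `y ≥ y₀` is a solution
  have : max y₀ (u + 1) ≤ u := hu fun k => by nlinarith [hy₀ k, hw k, le_max_left y₀ (u + 1)]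
  linarith [le_max_right y₀ (u + 1)]

theorem isGreatest_setOf_inf' [DecidablePred fun k => 0 < w k]
    (hne : ∃ y, ∀ k, w k * y ≤ c k) (hK : (univ.filter fun k => 0 < w k).Nonempty) :
    IsGreatest {y | ∀ k, w k * y ≤ c k}
      ((univ.filter fun k => 0 < w k).inf' hK fun k => c k / w k) := by
  set U := (univ.filter fun k => 0 < w k).inf' hK fun k => c k / w k
  have hle : ∀ y, (∀ k, w k * y ≤ c k) → y ≤ U := fun y hy =>
    le_inf' _ _ fun k hk => by
      rw [le_div_iff₀ (mem_filter.1 hk).2, mul_comm]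
      exact hy k
  obtain ⟨y₀, hy₀⟩ := hne
  refine ⟨fun k => ?_, hle⟩
  rcases lt_or_ge 0 (w k) with hwk | hwk
  · have hUk : U ≤ c k / w k := inf'_le _ (mem_filter.2 ⟨mem_univ k, hwk⟩)
    rwa [le_div_iff₀ hwk, mul_comm] at hUk
  · nlinarith [hy₀ k, hle y₀ hy₀]

end HalfLines

theorem exists_lowerClosure_image_feasibleSet_eq {m n : ℕ} (A : Matrix (Fin m) (Fin n) ℝ)
    (b : Fin m → ℝ) (c d : Fin n → ℝ) :
    ∃ (κ : Type) (_ : Fintype κ) (s w r : κ → ℝ), ∀ p,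
      (lowerClosure ((fun x => c ⬝ᵥ x) '' feasibleSet A b d p) : Set ℝ) =
        {y | ∀ k, w k * y ≤ s k * p + r k} := by
  classical
  -- `G *ᵥ x ≤ R + p • P + y • Y` is the system
  -- `-x ≤ 0`, `A *ᵥ x ≤ b`, `-A *ᵥ x ≤ -b`, `-d ⬝ᵥ x ≤ -p`, `-c ⬝ᵥ x ≤ -y`
  let G : Matrix (Fin n ⊕ Fin m ⊕ Fin m ⊕ Unit ⊕ Unit) (Fin n) ℝ :=
    fromRows (-1) (fromRows A (fromRows (-A) (fromRows (replicateRow Unit (-d))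
      (replicateRow Unit (-c)))))
  let R : Fin n ⊕ Fin m ⊕ Fin m ⊕ Unit ⊕ Unit → ℝ :=
    Sum.elim 0 (Sum.elim b (Sum.elim (-b) 0))
  let P : Fin n ⊕ Fin m ⊕ Fin m ⊕ Unit ⊕ Unit → ℝ :=
    Sum.elim 0 (Sum.elim 0 (Sum.elim 0 (Sum.elim (-1) 0)))
  let Y : Fin n ⊕ Fin m ⊕ Fin m ⊕ Unit ⊕ Unit → ℝ :=
    Sum.elim 0 (Sum.elim 0 (Sum.elim 0 (Sum.elim 0 (-1))))
  have hsystem : ∀ p y x,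
      (x ∈ feasibleSet A b d p ∧ y ≤ c ⬝ᵥ x) ↔ G *ᵥ x ≤ R + p • P + y • Y := by
    intro p y x
    have hrhs : R + p • P + y • Y = Sum.elim (0 : Fin n → ℝ) (Sum.elim b
        (Sum.elim (-b) (Sum.elim (Function.const _ (-p)) (Function.const _ (-y))))) := by
      ext (_ | _ | _ | _ | _) <;> simp [R, P, Y]
    simp [hrhs, G, fromRows_mulVec, replicateRow_mulVec_eq_const, neg_mulVec, feasibleSet,
      le_antisymm_iff, and_assoc]
  obtain ⟨L, hL⟩ := exists_finset_exists_mulVec_le_iff G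
  refine ⟨L, inferInstance, fun l => l.1 ⬝ᵥ P, fun l => -(l.1 ⬝ᵥ Y), fun l => l.1 ⬝ᵥ R,
    fun p => Set.ext fun y => ?_⟩
  simp only [SetLike.mem_coe, mem_lowerClosure, Set.exists_mem_image, hsystem, hL,
    Subtype.forall, dotProduct_add, dotProduct_smul, smul_eq_mul]
  exact forall₂_congr fun l _ => by constructor <;> intro h <;> linarith

/-- Theorem 1 (piecewise linearity): if the LP is feasible for all `p ∈ [0, pbar]` and
bounded above at `p = 0`, then `v` is piecewise linear on `[0, pbar]`: there are
breakpoints `0 = t 0 ≤ t 1 ≤ ⋯ ≤ t N = pbar` and affine pieces `α j * p + β j`. -/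
theorem commitValue_piecewiseLinear {m n : ℕ} (A : Matrix (Fin m) (Fin n) ℝ)
    (b : Fin m → ℝ) (c d : Fin n → ℝ) (pbar : ℝ) (hpbar : 0 ≤ pbar)
    (hfeas : ∀ p ∈ Set.Icc (0 : ℝ) pbar, (feasibleSet A b d p).Nonempty)
    (hbdd : BddAbove ((fun x => c ⬝ᵥ x) '' feasibleSet A b d 0)) :
    ∃ (N : ℕ), 1 ≤ N ∧ ∃ t : ℕ → ℝ, t 0 = 0 ∧ t N = pbar ∧
      (∀ j < N, t j ≤ t (j + 1)) ∧
      ∃ α β : ℕ → ℝ, ∀ j, 1 ≤ j → j ≤ N →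
        ∀ p ∈ Set.Icc (t (j - 1)) (t j),
          commitValue A b c d p = α j * p + β j := by
  classical
  obtain ⟨κ, _, s, w, r, hproj⟩ := exists_lowerClosure_image_feasibleSet_eq A b c d
  have hfiber : ∀ p ∈ Set.Icc (0 : ℝ) pbar, ∃ y, ∀ k, w k * y ≤ s k * p + r k := by
    rintro p hp
    obtain ⟨x, hx⟩ := hfeas p hp
    have hmem := subset_lowerClosure (Set.mem_image_of_mem (fun x => c ⬝ᵥ x) hx)
    rw [hproj p] at hmem
    exact ⟨_, hmem⟩
  have hK : (univ.filter fun k => 0 < w k).Nonempty := by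
    rw [← bddAbove_lowerClosure, hproj 0] at hbdd
    obtain ⟨k, hk⟩ := exists_pos_of_bddAbove_setOf (hfiber 0 ⟨le_rfl, hpbar⟩) hbdd
    exact ⟨k, mem_filter.2 ⟨mem_univ k, hk⟩⟩
  have hvalue : Set.EqOn (fun p => (univ.filter fun k => 0 < w k).inf' hK
      fun k => s k / w k * p + r k / w k) (commitValue A b c d) (Set.Icc 0 pbar) := by
    intro p hp
    refine (csSup_eq_of_isGreatest_lowerClosure ?_).symm
    rw [hproj p]
    simpa only [add_div, mul_div_right_comm] using isGreatest_setOf_inf' (hfiber p hp) hK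
  exact ((IsPiecewiseAffineOn.finset_inf' _ hK _ _ hpbar).congr hvalue).exists_partition
end

section
/- (Query-improvement lemma: replacing each query element by the posterior-optimal commitment does not decrease EUS; used in the proof of Lemma 2.) Let Q ⊆ C be a finite nonempty query, let r : I → C be a response map satisfying r i ∈ Q and f i (r i) = max_{c ∈ Q} f i c for every i ∈ I, and let c* : C → C be a map such that for every q ∈ Q and every c ∈ C, Σ_{i ∈ I, r i = q} w i · f i c ≤ Σ_{i ∈ I, r i = q} w i · f i (c* q) (i.e., c* q is an optimal commitment for the posterior obtained when the response is q). Then the query Q' given by the image of Q under c* satisfies |Q'| ≤ |Q| and EUS(Q') ≥ EUS(Q). -/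
/-- Expected Utility of Selection of a finite nonempty query `Q` of commitments:
`EUS(Q) = Σ i, w i * max_{c ∈ Q} f i c` (noiseless response model). -/
noncomputable def EUS {C I : Type*} [Fintype I] (w : I → ℝ) (f : I → C → ℝ)
    (Q : Finset C) (hQ : Q.Nonempty) : ℝ :=
  ∑ i, w i * Q.sup' hQ (f i)

/-! Group the models by their response `q = r i`. Within the fibre of `q` the response
`q` is beaten by the posterior optimum `cstar q`, so answering `cstar (r i)` instead of
`r i` does not lower the expected value; and `cstar (r i)` is one admissible answer to the
query `cstar '' Q`, whose best answer can only do better. -/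

theorem Finset.sum_comp_le_sum_comp_of_fiberwise_le {ι κ : Type*} [Fintype ι] [DecidableEq κ]
    (s : Finset κ) (r : ι → κ) (hr : ∀ i, r i ∈ s) (F G : ι → κ → ℝ)
    (hFG : ∀ q ∈ s, ∑ i ∈ univ.filter (fun i => r i = q), F i q ≤
      ∑ i ∈ univ.filter (fun i => r i = q), G i q) :
    ∑ i, F i (r i) ≤ ∑ i, G i (r i) := by
  rw [← sum_fiberwise_of_maps_to (fun i _ => hr i), ← sum_fiberwise_of_maps_to (fun i _ => hr i)]
  refine sum_le_sum fun q hq => ?_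
  calc ∑ i ∈ univ.filter (fun i => r i = q), F i (r i)
      = ∑ i ∈ univ.filter (fun i => r i = q), F i q :=
        sum_congr rfl fun i hi => by rw [(mem_filter.1 hi).2]
    _ ≤ ∑ i ∈ univ.filter (fun i => r i = q), G i q := hFG q hq
    _ = ∑ i ∈ univ.filter (fun i => r i = q), G i (r i) :=
        sum_congr rfl fun i hi => by rw [(mem_filter.1 hi).2]

section EUS

variable {C I : Type*} [Fintype I] (w : I → ℝ) (f : I → C → ℝ) (Q : Finset C) (hQ : Q.Nonempty)

theorem EUS_eq_sum_of_forall_eq_sup' (r : I → C) (hr : ∀ i, f i (r i) = Q.sup' hQ (f i)) :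
    EUS w f Q hQ = ∑ i, w i * f i (r i) := by
  simp only [EUS, hr]

theorem sum_le_EUS_of_forall_mem (hw : ∀ i, 0 ≤ w i) (g : I → C) (hg : ∀ i, g i ∈ Q) :
    ∑ i, w i * f i (g i) ≤ EUS w f Q hQ :=
  Finset.sum_le_sum fun i _ => mul_le_mul_of_nonneg_left (Finset.le_sup' (f i) (hg i)) (hw i)

end EUS

/-- Query-improvement lemma: if `r` maps each candidate model `i` to an optimal
response in `Q`, and `cstar q` is an optimal commitment for the posterior obtained
when the response is `q`, then replacing each element of `Q` by its posterior-optimal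
commitment yields a query `Q' = cstar '' Q` with `|Q'| ≤ |Q|` and `EUS(Q') ≥ EUS(Q)`. -/
theorem EUS_query_improvement {C I : Type*} [DecidableEq C] [Fintype I]
    (w : I → ℝ) (hw : ∀ i, 0 ≤ w i) (f : I → C → ℝ)
    (Q : Finset C) (hQ : Q.Nonempty)
    (r : I → C) (hr : ∀ i, r i ∈ Q ∧ f i (r i) = Q.sup' hQ (f i))
    (cstar : C → C)
    (hcstar : ∀ q ∈ Q, ∀ c : C,
      ∑ i ∈ Finset.univ.filter (fun i => r i = q), w i * f i c ≤
        ∑ i ∈ Finset.univ.filter (fun i => r i = q), w i * f i (cstar q)) :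
    (Q.image cstar).card ≤ Q.card ∧
      EUS w f Q hQ ≤ EUS w f (Q.image cstar) (hQ.image cstar) := by
  refine ⟨Finset.card_image_le, ?_⟩
  calc EUS w f Q hQ = ∑ i, w i * f i (r i) :=
        EUS_eq_sum_of_forall_eq_sup' w f Q hQ r fun i => (hr i).2
    _ ≤ ∑ i, w i * f i (cstar (r i)) :=
        Finset.sum_comp_le_sum_comp_of_fiberwise_le Q r (fun i => (hr i).1)
          (fun i c => w i * f i c) (fun i c => w i * f i (cstar c)) fun q hq => hcstar q hq q
    _ ≤ EUS w f (Q.image cstar) (hQ.image cstar) :=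
        sum_le_EUS_of_forall_mem w f _ _ hw _ fun i => Finset.mem_image_of_mem cstar (hr i).1
end

section
/- (Lemma 2 / Appendix Lemma 6, sufficiency of a posterior-optimal commitment set for query formulation.) Let D ⊆ C be a finite nonempty subset such that for every weight vector w' : I → ℝ with w'_i ≥ 0 for all i, there exists d ∈ D with Σ_{i ∈ I} w'_i · f i c ≤ Σ_{i ∈ I} w'_i · f i d for every c ∈ C (i.e., D contains an optimal commitment with respect to every posterior). Then for every finite nonempty query Q ⊆ C there exists a nonempty query Q' ⊆ D with |Q'| ≤ |Q| and EUS(Q') ≥ EUS(Q). In particular, for every query size k, the supremum of EUS over queries of size at most k drawn from C equals the maximum of EUS over queries of size at most k drawn from D. -/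
open Finset

section Fibers

variable {I C : Type*} [DecidableEq C]

def fiberWeights (w : I → ℝ) (g : I → C) (q : C) (i : I) : ℝ :=
  if g i = q then w i else 0

lemma fiberWeights_nonneg {w : I → ℝ} (hw : ∀ i, 0 ≤ w i) (g : I → C) (q : C) (i : I) :
    0 ≤ fiberWeights w g q i := by
  unfold fiberWeights
  split_ifs
  exacts [hw i, le_rfl]

lemma sum_mul_eq_sum_fiberWeights [Fintype I] (w : I → ℝ) (g : I → C) (F : I → C → ℝ) :
    ∑ i, w i * F i (g i) = ∑ q ∈ univ.image g, ∑ i, fiberWeights w g q i * F i q := by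
  rw [sum_comm]
  refine sum_congr rfl fun i _ => ?_
  simp only [fiberWeights, ite_mul, zero_mul]
  rw [sum_ite_eq, if_pos (mem_image_of_mem g (mem_univ i))]

lemma sum_mul_le_sum_mul_comp [Fintype I] (w : I → ℝ) (f : I → C → ℝ) (g : I → C) (d : C → C)
    (hd : ∀ q, ∑ i, fiberWeights w g q i * f i q ≤ ∑ i, fiberWeights w g q i * f i (d q)) :
    ∑ i, w i * f i (g i) ≤ ∑ i, w i * f i (d (g i)) := by
  rw [sum_mul_eq_sum_fiberWeights w g f,
    sum_mul_eq_sum_fiberWeights w g (fun i q => f i (d q))]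
  exact sum_le_sum fun q _ => hd q

end Fibers

section Queries

variable {I C : Type*} [Fintype I] {w : I → ℝ} {f : I → C → ℝ}

lemma exists_EUS_eq_sum (w : I → ℝ) (f : I → C → ℝ) {Q : Finset C} (hQ : Q.Nonempty) :
    ∃ g : I → C, (∀ i, g i ∈ Q) ∧ EUS w f Q hQ = ∑ i, w i * f i (g i) := by
  choose g hgQ hg using fun i => exists_mem_eq_sup' hQ (f i)
  exact ⟨g, hgQ, sum_congr rfl fun i _ => by rw [hg i]⟩

lemma sum_mul_le_EUS (hw : ∀ i, 0 ≤ w i) {Q : Finset C} (hQ : Q.Nonempty) {c : I → C}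
    (hc : ∀ i, c i ∈ Q) : ∑ i, w i * f i (c i) ≤ EUS w f Q hQ :=
  sum_le_sum fun i _ => mul_le_mul_of_nonneg_left (le_sup' (f i) (hc i)) (hw i)

lemma exists_subset_card_le_EUS_le (hw : ∀ i, 0 ≤ w i) {D : Finset C}
    (hopt : ∀ w' : I → ℝ, (∀ i, 0 ≤ w' i) →
      ∃ d ∈ D, ∀ c : C, ∑ i, w' i * f i c ≤ ∑ i, w' i * f i d)
    {Q : Finset C} (hQ : Q.Nonempty) :
    ∃ (Q' : Finset C) (hQ' : Q'.Nonempty), Q' ⊆ D ∧ Q'.card ≤ Q.card ∧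
      EUS w f Q hQ ≤ EUS w f Q' hQ' := by
  classical
  obtain ⟨g, hgQ, hEUS⟩ := exists_EUS_eq_sum w f hQ
  choose d hdD hd using fun q => hopt (fiberWeights w g q) (fiberWeights_nonneg hw g q)
  refine ⟨Q.image d, hQ.image d, image_subset_iff.mpr fun q _ => hdD q, card_image_le, ?_⟩
  calc EUS w f Q hQ = ∑ i, w i * f i (g i) := hEUS
    _ ≤ ∑ i, w i * f i (d (g i)) := sum_mul_le_sum_mul_comp w f g d fun q => hd q q
    _ ≤ EUS w f (Q.image d) (hQ.image d) :=
      sum_mul_le_EUS hw _ fun i => mem_image_of_mem d (hgQ i)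

end Queries

theorem EUS_breakpoint_sufficiency_general {C I : Type*} [Fintype I]
    (w : I → ℝ) (hw : ∀ i, 0 ≤ w i) (f : I → C → ℝ)
    (D : Finset C)
    (hopt : ∀ w' : I → ℝ, (∀ i, 0 ≤ w' i) →
      ∃ d ∈ D, ∀ c : C, ∑ i, w' i * f i c ≤ ∑ i, w' i * f i d) :
    (∀ (Q : Finset C) (hQ : Q.Nonempty),
      ∃ (Q' : Finset C) (hQ' : Q'.Nonempty), Q' ⊆ D ∧ Q'.card ≤ Q.card ∧
        EUS w f Q hQ ≤ EUS w f Q' hQ') ∧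
    ∀ k : ℕ, 1 ≤ k →
      sSup {x : ℝ | ∃ (Q : Finset C) (hQ : Q.Nonempty),
          Q.card ≤ k ∧ EUS w f Q hQ = x} =
        sSup {x : ℝ | ∃ (Q : Finset C) (hQ : Q.Nonempty),
          Q ⊆ D ∧ Q.card ≤ k ∧ EUS w f Q hQ = x} := by
  refine ⟨fun Q hQ => exists_subset_card_le_EUS_le hw hopt hQ,
    fun k _ => csSup_eq_csSup_of_forall_exists_le ?_ ?_⟩
  · rintro _ ⟨Q, hQ, hcard, rfl⟩
    obtain ⟨Q', hQ', hQ'D, hcard', hle⟩ := exists_subset_card_le_EUS_le hw hopt hQ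
    exact ⟨_, ⟨Q', hQ', hQ'D, hcard'.trans hcard, rfl⟩, hle⟩
  · rintro _ ⟨Q, hQ, -, hcard, rfl⟩
    exact ⟨_, ⟨Q, hQ, hcard, rfl⟩, le_rfl⟩

/-- Lemma 2 (sufficiency of a posterior-optimal commitment set): if a finite nonempty
set `D` contains an optimal commitment with respect to every nonnegative weight
(posterior) vector, then every query can be replaced by one drawn from `D` of no
larger size and no smaller EUS; consequently, for every query size `k ≥ 1`, the
supremum of EUS over size-≤-k queries from `C` equals that over size-≤-k queries
from `D`. -/
theorem EUS_breakpoint_sufficiency {C I : Type*} [DecidableEq C] [Fintype I]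
    (w : I → ℝ) (hw : ∀ i, 0 ≤ w i) (f : I → C → ℝ)
    (D : Finset C) (hD : D.Nonempty)
    (hopt : ∀ w' : I → ℝ, (∀ i, 0 ≤ w' i) →
      ∃ d ∈ D, ∀ c : C, ∑ i, w' i * f i c ≤ ∑ i, w' i * f i d) :
    (∀ (Q : Finset C) (hQ : Q.Nonempty),
      ∃ (Q' : Finset C) (hQ' : Q'.Nonempty), Q' ⊆ D ∧ Q'.card ≤ Q.card ∧
        EUS w f Q hQ ≤ EUS w f Q' hQ') ∧
    ∀ k : ℕ, 1 ≤ k →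
      sSup {x : ℝ | ∃ (Q : Finset C) (hQ : Q.Nonempty),
          Q.card ≤ k ∧ EUS w f Q hQ = x} =
        sSup {x : ℝ | ∃ (Q : Finset C) (hQ : Q.Nonempty),
          Q ⊆ D ∧ Q.card ≤ k ∧ EUS w f Q hQ = x} :=
  EUS_breakpoint_sufficiency_general w hw f D hopt
end

section
/- (Theorem 5, no loss in restricting queries to breakpoint commitments.) Let τ be a finite nonempty type of commitment times. For each T ∈ τ let p̄_T ≥ 0 with breakpoints 0 = t_{T,0} ≤ t_{T,1} ≤ ⋯ ≤ t_{T,n_T} = p̄_T, let h_T : ℝ → ℝ be affine on each subinterval [t_{T,j−1}, t_{T,j}] (the provider's piecewise linear commitment value for time T), and for each i ∈ I let g_{i,T} : ℝ → ℝ be convex on [0, p̄_T] (the recipient's commitment value under candidate model i). A commitment is a pair (T, p) with p ∈ [0, p̄_T], and the joint value under model i is f i (T, p) = h_T(p) + g_{i,T}(p). Then for every finite nonempty set Q of commitments there exists a nonempty set Q' consisting only of breakpoint commitments (T, t_{T,j}) with |Q'| ≤ |Q| and Σ_{i ∈ I} w_i · max_{c ∈ Q'} f i c ≥ Σ_{i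 ∈ I} w_i · max_{c ∈ Q} f i c. Hence, for every query size k, maximizing EUS over size-k queries of commitments loses nothing by restricting to the provider's breakpoint commitments. -/
/-!
Assign every model to the query point at which its joint value is largest, and group the
models by their assigned point. On the breakpoint segment containing a point `(T, p)`, the
weighted joint value of its group is a sum of an affine and a convex function of `p`, hence
convex, so it does not decrease when `p` is moved to one of the two ends of the segment.
Moving every point this way does not enlarge the query, and each group keeps at least its old
value, so the expected utility of selection does not decrease.
-/

open Finset Set

noncomputable def expectedUtilityOfSelection {α I : Type*} [Fintype I] (w : I → ℝ)
    (f : I → α → ℝ) (Q : Finset α) (hQ : Q.Nonempty) : ℝ :=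
  ∑ i, w i * Q.sup' hQ (f i)

theorem exists_query_expectedUtilityOfSelection_le_of_exchange {α I : Type*} [Fintype I]
    {w : I → ℝ} (hw : ∀ i, 0 ≤ w i) {f : I → α → ℝ} {P : α → Prop} {Q : Finset α}
    (hQ : Q.Nonempty)
    (hP : ∀ c ∈ Q, ∀ S : Finset I, ∃ c', P c' ∧ ∑ i ∈ S, w i * f i c ≤ ∑ i ∈ S, w i * f i c') :
    ∃ (Q' : Finset α) (hQ' : Q'.Nonempty), (∀ c ∈ Q', P c) ∧ Q'.card ≤ Q.card ∧
      expectedUtilityOfSelection w f Q hQ ≤ expectedUtilityOfSelection w f Q' hQ' := by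
  classical
  choose σ hσQ hσ using fun i => Q.exists_mem_eq_sup' hQ (f i)
  let group : α → Finset I := fun c => univ.filter (σ · = c)
  choose! φ hφP hφ using fun c hc => hP c hc (group c)
  have hgroup (F : I → ℝ) : ∑ c ∈ Q, ∑ i ∈ group c, F i = ∑ i, F i :=
    sum_fiberwise_of_maps_to (fun i _ => hσQ i) F
  refine ⟨Q.image φ, hQ.image φ, ?_, card_image_le, ?_⟩
  · exact forall_mem_image.2 hφP
  calc expectedUtilityOfSelection w f Q hQ
      = ∑ c ∈ Q, ∑ i ∈ group c, w i * f i c := by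
        simp only [expectedUtilityOfSelection, hσ, ← hgroup]
        refine sum_congr rfl fun c _ => sum_congr rfl fun i hi => ?_
        rw [(mem_filter.1 hi).2]
    _ ≤ ∑ c ∈ Q, ∑ i ∈ group c, w i * f i (φ c) := sum_le_sum hφ
    _ ≤ ∑ c ∈ Q, ∑ i ∈ group c, w i * (Q.image φ).sup' (hQ.image φ) (f i) := by
        gcongr with c hc i
        · exact hw i
        · exact le_sup' (f i) (mem_image_of_mem φ hc)
    _ = expectedUtilityOfSelection w f (Q.image φ) (hQ.image φ) := hgroup _

lemma ConvexOn.sum_mul {ι E : Type*} [AddCommMonoid E] [Module ℝ E] {s : Set E}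
    (hs : Convex ℝ s) {S : Finset ι} {w : ι → ℝ} (hw : ∀ i ∈ S, 0 ≤ w i) {f : ι → E → ℝ}
    (hf : ∀ i ∈ S, ConvexOn ℝ s (f i)) : ConvexOn ℝ s fun x => ∑ i ∈ S, w i * f i x := by
  have := sum_induction (fun i x => w i * f i x) (ConvexOn ℝ s) (fun _ _ => ConvexOn.add)
    (convexOn_const 0 hs) fun i hi => (hf i hi).smul (hw i hi)
  rwa [Finset.sum_fn] at this

lemma convexOn_of_eqOn_affine {s : Set ℝ} (hs : Convex ℝ s) {f : ℝ → ℝ} {a b : ℝ}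
    (hf : ∀ x ∈ s, f x = a * x + b) : ConvexOn ℝ s f :=
  (((LinearMap.mulLeft ℝ a).convexOn hs).add_const b).congr fun x hx => (hf x hx).symm

lemma exists_mem_Icc_succ_of_mem_Icc {t : ℕ → ℝ} {N : ℕ} (hN : 0 < N) {p : ℝ}
    (hp : p ∈ Icc (t 0) (t N)) : ∃ j < N, p ∈ Icc (t j) (t (j + 1)) := by
  induction N, hN using Nat.le_induction with
  | base => exact ⟨0, one_pos, hp⟩
  | succ n _ ih =>
    rcases le_or_gt p (t n) with hpn | hpn
    · obtain ⟨j, hj, hpj⟩ := ih ⟨hp.1, hpn⟩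
      exact ⟨j, by omega, hpj⟩
    · exact ⟨n, n.lt_succ_self, hpn.le, hp.2⟩

lemma exists_le_apply_of_convexOn_Icc_succ {t : ℕ → ℝ} {N : ℕ} (hN : 0 < N) {F : ℝ → ℝ}
    (hF : ∀ j < N, ConvexOn ℝ (Icc (t j) (t (j + 1))) F) {p : ℝ} (hp : p ∈ Icc (t 0) (t N)) :
    ∃ j ≤ N, F p ≤ F (t j) := by
  obtain ⟨j, hj, hpj⟩ := exists_mem_Icc_succ_of_mem_Icc hN hp
  have hseg : t j ≤ t (j + 1) := hpj.1.trans hpj.2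
  have hmax := (hF j hj).le_max_of_mem_Icc (left_mem_Icc.2 hseg) (right_mem_Icc.2 hseg) hpj
  rcases max_choice (F (t j)) (F (t (j + 1))) with hmax' | hmax' <;> rw [hmax'] at hmax
  · exact ⟨j, hj.le, hmax⟩
  · exact ⟨j + 1, hj, hmax⟩

theorem EUS_breakpoint_query_no_loss_general {τ I : Type*} [Fintype I]
    (w : I → ℝ) (hw : ∀ i, 0 ≤ w i)
    (pbar : τ → ℝ)
    (N : τ → ℕ) (hN : ∀ T, 1 ≤ N T)
    (t : τ → ℕ → ℝ) (ht0 : ∀ T, t T 0 = 0) (htN : ∀ T, t T (N T) = pbar T)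
    (hmono : ∀ T, ∀ j < N T, t T j ≤ t T (j + 1))
    (h : τ → ℝ → ℝ)
    (hh : ∀ T, ∀ j, 1 ≤ j → j ≤ N T → ∃ α β : ℝ,
      ∀ p ∈ Set.Icc (t T (j - 1)) (t T j), h T p = α * p + β)
    (g : I → τ → ℝ → ℝ)
    (hg : ∀ i T, ConvexOn ℝ (Set.Icc 0 (pbar T)) (g i T))
    (Q : Finset (τ × ℝ)) (hQ : Q.Nonempty)
    (hQvalid : ∀ c ∈ Q, c.2 ∈ Set.Icc 0 (pbar c.1)) :
    ∃ (Q' : Finset (τ × ℝ)) (hQ' : Q'.Nonempty),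
      (∀ c ∈ Q', ∃ j ≤ N c.1, c.2 = t c.1 j) ∧
      Q'.card ≤ Q.card ∧
      ∑ i, w i * Q.sup' hQ (fun c => h c.1 c.2 + g i c.1 c.2) ≤
        ∑ i, w i * Q'.sup' hQ' (fun c => h c.1 c.2 + g i c.1 c.2) := by
  refine exists_query_expectedUtilityOfSelection_le_of_exchange hw hQ fun ⟨T, p⟩ hc S => ?_
  have ht : MonotoneOn (t T) (Set.Iic (N T)) :=
    monotoneOn_of_le_succ ordConnected_Iic fun j _ _ hj => hmono T j (Order.succ_le_iff.1 hj)
  have hconv (j : ℕ) (hj : j < N T) : ConvexOn ℝ (Icc (t T j) (t T (j + 1)))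
      fun x => ∑ i ∈ S, w i * (h T x + g i T x) := by
    obtain ⟨α, β, hαβ⟩ := hh T (j + 1) (by omega) hj
    have hsub : Icc (t T j) (t T (j + 1)) ⊆ Icc 0 (pbar T) := by
      rw [← ht0 T, ← htN T]
      exact Icc_subset_Icc (ht (Nat.zero_le _) hj.le (Nat.zero_le _)) (ht hj self_mem_Iic hj)
    refine ConvexOn.sum_mul (convex_Icc _ _) (fun i _ => hw i) fun i _ => ?_
    exact (convexOn_of_eqOn_affine (convex_Icc _ _) hαβ).add
      ((hg i T).subset hsub (convex_Icc _ _))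
  obtain ⟨j, hj, hle⟩ := exists_le_apply_of_convexOn_Icc_succ (hN T) hconv
    (by rw [ht0, htN]; exact hQvalid _ hc)
  exact ⟨(T, t T j), ⟨j, hj, rfl⟩, hle⟩

/-- Theorem 5 (no loss in restricting queries to breakpoint commitments).
Commitments are pairs `(T, p)` with `p ∈ [0, pbar T]`; for each time `T` the
provider's value `h T` is piecewise linear with breakpoints `t T 0 ≤ ⋯ ≤ t T (N T)`,
and each candidate recipient value `g i T` is convex on `[0, pbar T]`. Then every
finite nonempty query `Q` of commitments can be replaced by a query `Q'` consisting
only of breakpoint commitments, with `|Q'| ≤ |Q|` and no smaller EUS. -/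
theorem EUS_breakpoint_query_no_loss {τ I : Type*} [Fintype τ] [Nonempty τ] [Fintype I]
    (w : I → ℝ) (hw : ∀ i, 0 ≤ w i)
    (pbar : τ → ℝ) (hpbar : ∀ T, 0 ≤ pbar T)
    (N : τ → ℕ) (hN : ∀ T, 1 ≤ N T)
    (t : τ → ℕ → ℝ) (ht0 : ∀ T, t T 0 = 0) (htN : ∀ T, t T (N T) = pbar T)
    (hmono : ∀ T, ∀ j < N T, t T j ≤ t T (j + 1))
    (h : τ → ℝ → ℝ)
    (hh : ∀ T, ∀ j, 1 ≤ j → j ≤ N T → ∃ α β : ℝ,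
      ∀ p ∈ Set.Icc (t T (j - 1)) (t T j), h T p = α * p + β)
    (g : I → τ → ℝ → ℝ)
    (hg : ∀ i T, ConvexOn ℝ (Set.Icc 0 (pbar T)) (g i T))
    (Q : Finset (τ × ℝ)) (hQ : Q.Nonempty)
    (hQvalid : ∀ c ∈ Q, c.2 ∈ Set.Icc 0 (pbar c.1)) :
    ∃ (Q' : Finset (τ × ℝ)) (hQ' : Q'.Nonempty),
      (∀ c ∈ Q', ∃ j ≤ N c.1, c.2 = t c.1 j) ∧
      Q'.card ≤ Q.card ∧
      ∑ i, w i * Q.sup' hQ (fun c => h c.1 c.2 + g i c.1 c.2) ≤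
        ∑ i, w i * Q'.sup' hQ' (fun c => h c.1 c.2 + g i c.1 c.2) :=
  EUS_breakpoint_query_no_loss_general w hw pbar N hN t ht0 htN hmono h hh g hg Q hQ hQvalid
end

section
/- (Greedy query guarantee via submodularity, the (1 − ((k−1)/k)^k)-approximation invoked after Theorem 5.) Let C be a finite nonempty type, I a finite index set, w : I → ℝ≥0, and f : I → C → ℝ≥0. Define F on finite subsets of C by F(Q) = Σ_{i ∈ I} w_i · (sup of f i over Q, equal to 0 when Q = ∅). Fix k ≥ 1 and a greedy sequence Q_0 = ∅ and Q_{j+1} = insert c_j Q_j for j = 0, …, k−1, where each c_j satisfies F(insert c Q_j) ≤ F(insert c_j Q_j) for all c ∈ C. Then for every Q ⊆ C with |Q| = k, F(Q_k) ≥ (1 − (1 − 1/k)^k) · F(Q). -/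
/-!
Each utility `Q ↦ Q.sup (f i)` is attained at a single point of `Q`, so for every `S` the value of
a query `T` is at most `F S` plus the sum over `c ∈ T` of the marginal gains `F (insert c S) - F S`.
Applied to the greedy query `S = Q j` and an optimal `T` of size `k`, each gain is at most the
greedy one, so the deficit `F T - F (Q j)` shrinks by a factor `1 - 1/k` at each step.
-/

open scoped NNReal

/-- The Expected Utility of Selection with nonnegative weights and values:
`F(Q) = Σ i, w i * sup_{c ∈ Q} f i c` (the sup over the empty set being `0`). -/
noncomputable def EUSnn {C I : Type*} [Fintype I] (w : I → ℝ≥0) (f : I → C → ℝ≥0)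
    (Q : Finset C) : ℝ≥0 :=
  ∑ i, w i * Q.sup (f i)

open Finset

theorem NNReal.coe_finset_sup_le_add_sum_sub {C : Type*} [DecidableEq C] (g : C → ℝ≥0)
    (S T : Finset C) :
    ((T.sup g : ℝ≥0) : ℝ) ≤
      (S.sup g : ℝ≥0) + ∑ c ∈ T, (((insert c S).sup g : ℝ≥0) - ((S.sup g : ℝ≥0) : ℝ)) := by
  have hgain (c : C) : ((S.sup g : ℝ≥0) : ℝ) ≤ ((insert c S).sup g : ℝ≥0) := by
    exact_mod_cast sup_mono (subset_insert c S)
  rcases T.eq_empty_or_nonempty with rfl | hT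
  · simp
  obtain ⟨c, hc, hsup⟩ := T.exists_mem_eq_sup hT g
  calc ((T.sup g : ℝ≥0) : ℝ) = g c := by rw [hsup]
    _ ≤ ((insert c S).sup g : ℝ≥0) := by exact_mod_cast le_sup (mem_insert_self c S)
    _ = (S.sup g : ℝ≥0) + (((insert c S).sup g : ℝ≥0) - ((S.sup g : ℝ≥0) : ℝ)) := by ring
    _ ≤ _ := by
      gcongr
      exact single_le_sum (fun c _ => sub_nonneg.2 (hgain c)) hc

theorem EUSnn_le_add_sum_sub {C I : Type*} [DecidableEq C] [Fintype I] (w : I → ℝ≥0)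
    (f : I → C → ℝ≥0) (S T : Finset C) :
    (EUSnn w f T : ℝ) ≤
      EUSnn w f S + ∑ c ∈ T, ((EUSnn w f (insert c S) : ℝ) - EUSnn w f S) := by
  have expand (R : Finset C) : (EUSnn w f R : ℝ) = ∑ i, (w i : ℝ) * ((R.sup (f i) : ℝ≥0) : ℝ) := by
    simp [EUSnn]
  simp only [expand, ← sum_sub_distrib, ← mul_sub]
  rw [sum_comm, ← sum_add_distrib]
  gcongr with i
  rw [← mul_sum, ← mul_add]
  exact mul_le_mul_of_nonneg_left (NNReal.coe_finset_sup_le_add_sum_sub _ _ _) (w i).coe_nonneg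

theorem deficit_le_of_le_add_mul_sub {V a b k : ℝ} (hk : 0 < k) (h : V ≤ a + k * (b - a)) :
    V - b ≤ (1 - 1 / k) * (V - a) := by
  have : (V - a) / k ≤ b - a := by rw [div_le_iff₀ hk]; linarith
  calc V - b ≤ V - a - (V - a) / k := by linarith
    _ = (1 - 1 / k) * (V - a) := by ring

theorem greedy_deficit_le {C : Type*} [DecidableEq C] (F : Finset C → ℝ)
    (hgains : ∀ S T : Finset C, F T ≤ F S + ∑ c ∈ T, (F (insert c S) - F S))
    (k : ℕ) (Q : ℕ → Finset C) (c : ℕ → C)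
    (hstep : ∀ j < k, Q (j + 1) = insert (c j) (Q j))
    (hgreedy : ∀ j < k, ∀ c' : C, F (insert c' (Q j)) ≤ F (insert (c j) (Q j)))
    (T : Finset C) (hT : T.card = k) :
    ∀ j ≤ k, F T - F (Q j) ≤ (1 - 1 / (k : ℝ)) ^ j * (F T - F (Q 0)) := by
  intro j
  induction j with
  | zero => simp
  | succ j ih =>
    intro hj
    have hjk : j < k := hj
    have hk : (0 : ℝ) < k := Nat.cast_pos.2 (Nat.zero_lt_of_lt hjk)
    have hmarginal : F T ≤ F (Q j) + k * (F (Q (j + 1)) - F (Q j)) :=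
      calc F T ≤ F (Q j) + ∑ c' ∈ T, (F (insert c' (Q j)) - F (Q j)) := hgains _ _
        _ ≤ F (Q j) + ∑ _c' ∈ T, (F (Q (j + 1)) - F (Q j)) := by
          gcongr with c' _
          rw [hstep j hjk]
          exact hgreedy j hjk c'
        _ = F (Q j) + k * (F (Q (j + 1)) - F (Q j)) := by
          rw [sum_const, hT, nsmul_eq_mul]
    have hfactor : 0 ≤ 1 - 1 / (k : ℝ) := by
      rw [sub_nonneg, div_le_one hk]
      exact_mod_cast Nat.one_le_of_lt hjk
    calc F T - F (Q (j + 1)) ≤ (1 - 1 / (k : ℝ)) * (F T - F (Q j)) :=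
          deficit_le_of_le_add_mul_sub hk hmarginal
      _ ≤ (1 - 1 / (k : ℝ)) * ((1 - 1 / (k : ℝ)) ^ j * (F T - F (Q 0))) := by
          gcongr
          exact ih hjk.le
      _ = (1 - 1 / (k : ℝ)) ^ (j + 1) * (F T - F (Q 0)) := by ring

theorem greedy_EUS_guarantee_general {C I : Type*} [DecidableEq C]
    [Fintype I] (w : I → ℝ≥0) (f : I → C → ℝ≥0)
    (k : ℕ)
    (Q : ℕ → Finset C) (c : ℕ → C)
    (hQ0 : Q 0 = ∅)
    (hstep : ∀ j < k, Q (j + 1) = insert (c j) (Q j))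
    (hgreedy : ∀ j < k, ∀ c' : C,
      EUSnn w f (insert c' (Q j)) ≤ EUSnn w f (insert (c j) (Q j))) :
    ∀ Qopt : Finset C, Qopt.card = k →
      (1 - (1 - 1 / (k : ℝ)) ^ k) * (EUSnn w f Qopt : ℝ) ≤ (EUSnn w f (Q k) : ℝ) := by
  intro Qopt hcard
  have hdeficit := greedy_deficit_le (fun S => (EUSnn w f S : ℝ)) (EUSnn_le_add_sum_sub w f)
    k Q c hstep (fun j hj c' => by exact_mod_cast hgreedy j hj c') Qopt hcard k le_rfl
  have hempty : (EUSnn w f (Q 0) : ℝ) = 0 := by simp [hQ0, EUSnn]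
  rw [hempty, sub_zero] at hdeficit
  linarith

/-- Greedy query guarantee (Nemhauser–Wolsey–Fisher): the greedily-formed size-`k`
query achieves at least a `1 - (1 - 1/k)^k` fraction of the EUS of any size-`k` query. -/
theorem greedy_EUS_guarantee {C I : Type*} [Fintype C] [Nonempty C] [DecidableEq C]
    [Fintype I] (w : I → ℝ≥0) (f : I → C → ℝ≥0)
    (k : ℕ) (hk : 1 ≤ k)
    (Q : ℕ → Finset C) (c : ℕ → C)
    (hQ0 : Q 0 = ∅)
    (hstep : ∀ j < k, Q (j + 1) = insert (c j) (Q j))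
    (hgreedy : ∀ j < k, ∀ c' : C,
      EUSnn w f (insert c' (Q j)) ≤ EUSnn w f (insert (c j) (Q j))) :
    ∀ Qopt : Finset C, Qopt.card = k →
      (1 - (1 - 1 / (k : ℝ)) ^ k) * (EUSnn w f Qopt : ℝ) ≤ (EUSnn w f (Q k) : ℝ) :=
  greedy_EUS_guarantee_general w f k Q c hQ0 hstep hgreedy
end
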